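/- arXiv:2009.03358 — 2 statements merged into one kernel-verified Lean document; each statement's English description precedes it below -/
import Mathlib

section
/- C functionally determines Y (every pair of rows agreeing on all columns of C also agrees on all columns of Y) if and only if r(C) = r(C ∪ Y). -/
/-! Restricting first to `C ∪ Y` and then to `C` maps the `r(C ∪ Y)` restrictions of rows to
`C ∪ Y` onto the `r(C)` restrictions to `C`. A surjection between finite sets preserves
cardinality exactly when it is injective, and injectivity of this one says that rows agreeing
on `C` agree on `C ∪ Y`. -/

/-- Number of distinct restrictions of rows to the columns in `C`. -/
noncomputable def distinctCount {R : ℕ} {N V : Type*} (T : Fin R → N → V) (C : Set N) : ℕ :=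
  Nat.card (Set.range fun i : Fin R => C.restrict (T i))

/-- `C` functionally determines `Y`: rows agreeing on all columns of `C`
agree on all columns of `Y`. -/
def FD {R : ℕ} {N V : Type*} (T : Fin R → N → V) (C Y : Set N) : Prop :=
  ∀ i j : Fin R, (∀ c ∈ C, T i c = T j c) → ∀ y ∈ Y, T i y = T j y

open Set

@[simp]
theorem Set.domRestrict₂_domRestrict {α β : Type*} {s t : Set α} (hst : s ⊆ t) (f : α → β) :
    domRestrict₂ hst (t.domRestrict f) = s.domRestrict f :=
  rfl

theorem Set.range_domRestrict_eq_image_domRestrict₂ {ι α β : Type*} (f : ι → α → β)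
    {s t : Set α} (hst : s ⊆ t) :
    range (fun i => s.domRestrict (f i)) =
      domRestrict₂ hst '' range fun i => t.domRestrict (f i) := by
  rw [← range_comp]
  rfl

theorem Set.injOn_range_iff {ι α β : Type*} {f : ι → α} {g : α → β} :
    InjOn g (range f) ↔ ∀ i j, g (f i) = g (f j) → f i = f j := by
  simp only [InjOn, forall_mem_range]

section

variable {R : ℕ} {N V : Type*} (T : Fin R → N → V) (C Y : Set N)

theorem distinctCount_eq_ncard : distinctCount T C = (range fun i => C.domRestrict (T i)).ncard :=
  rfl

theorem fd_iff_injOn_domRestrict₂ :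
    FD T C Y ↔
      InjOn (domRestrict₂ subset_union_left) (range fun i => (C ∪ Y).domRestrict (T i)) := by
  simp only [injOn_range_iff, domRestrict₂_domRestrict, domRestrict_eq_domRestrict_iff,
    eqOn_union]
  exact forall₂_congr fun _ _ => imp_congr_right fun hC => (and_iff_right hC).symm

end

theorem fd_iff_distinctCount_eq {R : ℕ} {N V : Type*} (T : Fin R → N → V) (C Y : Set N) :
    FD T C Y ↔ distinctCount T C = distinctCount T (C ∪ Y) := by
  rw [distinctCount_eq_ncard, distinctCount_eq_ncard,
    range_domRestrict_eq_image_domRestrict₂ T subset_union_left,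
    ncard_image_iff (finite_range _), fd_iff_injOn_domRestrict₂]
end

section
/- If every column of the addition set A is a descendant of Y (i.e., Y → {a} for each a ∈ A), then ẽ((C ∪ A) → Y) ≤ ẽ(C → Y); i.e., the count-ratio error ẽ is non-increasing under adding columns from Descendant(Y). -/
/-! Since `Y` determines every column of `A`, adding `A` to `C ∪ Y` leaves the number of distinct
rows unchanged, so both errors share a denominator, while the numerator can only grow from `C` to
`C ∪ A`. Counts are compared through the restriction map from `D`-rows to `C`-rows for `C ⊆ D`:
it is onto, and one-to-one when `C` determines the columns of `D`. -/

section

variable {R : ℕ} {N V : Type*} (T : Fin R → N → V)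

theorem FD.mono_left {C D Y : Set N} (hCD : C ⊆ D) (h : FD T C Y) : FD T D Y :=
  fun i j hij => h i j fun c hc => hij c (hCD hc)

theorem fd_of_forall_singleton {Y A : Set N} (h : ∀ a ∈ A, FD T Y {a}) : FD T Y A :=
  fun i j hij a ha => h a ha i j hij a rfl

theorem range_restrict_eq_image {C D : Set N} (hCD : C ⊆ D) :
    (Set.range fun i : Fin R => C.restrict (T i)) =
      Set.domRestrict₂ hCD '' Set.range fun i : Fin R => D.restrict (T i) := by
  rw [← Set.range_comp]
  rfl

theorem distinctCount_mono {C D : Set N} (hCD : C ⊆ D) :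
    distinctCount T C ≤ distinctCount T D := by
  unfold distinctCount
  rw [range_restrict_eq_image T hCD]
  exact Nat.card_image_le (Set.finite_range _)

theorem distinctCount_union_eq_of_fd {D A : Set N} (h : FD T D A) :
    distinctCount T (D ∪ A) = distinctCount T D := by
  unfold distinctCount
  rw [range_restrict_eq_image T (Set.subset_union_left : D ⊆ D ∪ A)]
  refine (Nat.card_image_of_injOn ?_).symm
  rintro _ ⟨i, rfl⟩ _ ⟨j, rfl⟩ hij
  have hD : ∀ d ∈ D, T i d = T j d := fun d hd => congrFun hij ⟨d, hd⟩
  funext ⟨n, hn⟩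
  rcases hn with hnD | hnA
  · exact hD n hnD
  · exact h i j hD n hnA

end

theorem tilde_error_anti_of_descendants {R : ℕ} {N V : Type*} (T : Fin R → N → V)
    (C Y A : Set N) (hA : ∀ a ∈ A, FD T Y {a}) :
    1 - (distinctCount T (C ∪ A) : ℝ) / (distinctCount T (C ∪ A ∪ Y) : ℝ) ≤
      1 - (distinctCount T C : ℝ) / (distinctCount T (C ∪ Y) : ℝ) := by
  have hdet : FD T (C ∪ Y) A :=
    (fd_of_forall_singleton T hA).mono_left T Set.subset_union_right
  have hcount : distinctCount T (C ∪ A ∪ Y) = distinctCount T (C ∪ Y) := by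
    rw [Set.union_right_comm, distinctCount_union_eq_of_fd T hdet]
  rw [hcount]
  have hle : (distinctCount T C : ℝ) ≤ distinctCount T (C ∪ A) := by
    exact_mod_cast distinctCount_mono T Set.subset_union_left
  exact sub_le_sub_left (div_le_div_of_nonneg_right hle (Nat.cast_nonneg _)) 1
end
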